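/- arXiv:2511.22021 — 4 statements merged into one kernel-verified Lean document; each statement's English description precedes it below -/
import Mathlib

section
/- Let a_i, a_{i+1} ≥ 2 be integers. The vectors v_{i-2} - v_i = (2p_{i-2} - a_i p_{i-1}, 2q_{i-2} - a_i q_{i-1}) and v_{i+1} - v_{i-1} = (a_{i+1} p_i - 2p_{i-1}, a_{i+1} q_i - 2q_{i-1}) are linearly dependent (their 2×2 determinant vanishes) if and only if a_i = 2 and a_{i+1} = 2. -/
theorem wronskian_aux (a p q : ℤ → ℤ)
    (hpm1 : p (-1) = 0) (hp0 : p 0 = 1)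
    (hp : ∀ j : ℤ, 1 ≤ j → p j = a j * p (j - 1) - p (j - 2))
    (hq0 : q 0 = 0) (hq1 : q 1 = 1)
    (hq : ∀ j : ℤ, 2 ≤ j → q j = a j * q (j - 1) - q (j - 2)) :
    ∀ j : ℤ, 1 ≤ j → p (j - 1) * q j - p j * q (j - 1) = 1 := by
  refine Int.le_induction (motive := fun j _ => p (j - 1) * q j - p j * q (j - 1) = 1) ?_ ?_
  · norm_num [hq0, hq1, hp0]
  · intro j hj ih
    have hpj := hp (j + 1) (by linarith)
    have hqj := hq (j + 1) (by linarith)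
    have e1 : j + 1 - 1 = j := by ring
    have e2 : j + 1 - 2 = j - 1 := by ring
    rw [e1, e2] at hpj hqj
    rw [e1, hpj, hqj]
    linear_combination ih

/-- The vectors `v_{i-2} - v_i` and `v_{i+1} - v_{i-1}` are linearly dependent
(their 2×2 determinant vanishes) if and only if `a_i = 2` and `a_{i+1} = 2`. -/
theorem stmt2 (a p q : ℤ → ℤ)
    (ha : ∀ j : ℤ, 2 ≤ j → 2 ≤ a j)
    (hpm1 : p (-1) = 0) (hp0 : p 0 = 1)
    (hp : ∀ j : ℤ, 1 ≤ j → p j = a j * p (j - 1) - p (j - 2))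
    (hq0 : q 0 = 0) (hq1 : q 1 = 1)
    (hq : ∀ j : ℤ, 2 ≤ j → q j = a j * q (j - 1) - q (j - 2))
    (i : ℤ) (hi : 2 ≤ i) :
    (2 * p (i - 2) - a i * p (i - 1)) * (a (i + 1) * q i - 2 * q (i - 1)) -
      (2 * q (i - 2) - a i * q (i - 1)) * (a (i + 1) * p i - 2 * p (i - 1)) = 0 ↔
    a i = 2 ∧ a (i + 1) = 2 := by
  have hW := wronskian_aux a p q hpm1 hp0 hp hq0 hq1 hq (i - 1) (by linarith)
  have e : i - 1 - 1 = i - 2 := by ring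
  rw [e] at hW
  have hpi := hp i (by linarith)
  have hqi := hq i hi
  have key : (2 * p (i - 2) - a i * p (i - 1)) * (a (i + 1) * q i - 2 * q (i - 1)) -
      (2 * q (i - 2) - a i * q (i - 1)) * (a (i + 1) * p i - 2 * p (i - 1)) =
      a i * a (i + 1) - 4 := by
    rw [hpi, hqi]
    linear_combination (a i * a (i + 1) - 4) * hW
  rw [key]
  have h1 := ha i hi
  have h2 := ha (i + 1) (by linarith)
  constructor
  · intro h
    constructor <;> nlinarith
  · rintro ⟨hA, hB⟩
    rw [hA, hB]; ring
end

section
/- Suppose a_i = 2m and a_{i+1} = 2n with m, n ≥ 1. Then det of the matrix with rows (p_{i-2} - m p_{i-1}, q_{i-2} - m q_{i-1}) and (n p_i - p_{i-1}, n q_i - q_{i-1}) equals n a_i - n m - 1 = nm - 1. In particular this determinant equals 1 if and only if nm = 2, i.e. (m,n) ∈ {(1,2),(2,1)}, equivalently (a_i, a_{i+1}) ∈ {(2,4),(4,2)}. -/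
/-- If `a_i = 2m` and `a_{i+1} = 2n` with `m, n ≥ 1`, then the determinant of the matrix
with rows `(p_{i-2} - m p_{i-1}, q_{i-2} - m q_{i-1})` and `(n p_i - p_{i-1}, n q_i - q_{i-1})`
equals `n a_i - n m - 1 = nm - 1`, and it equals `1` iff `(a_i, a_{i+1}) ∈ {(2,4),(4,2)}`. -/
theorem stmt7 (a p q : ℤ → ℤ)
    (ha : ∀ j : ℤ, 2 ≤ j → 2 ≤ a j)
    (hpm1 : p (-1) = 0) (hp0 : p 0 = 1)
    (hp : ∀ j : ℤ, 1 ≤ j → p j = a j * p (j - 1) - p (j - 2))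
    (hq0 : q 0 = 0) (hq1 : q 1 = 1)
    (hq : ∀ j : ℤ, 2 ≤ j → q j = a j * q (j - 1) - q (j - 2))
    (i m n : ℤ) (hi : 2 ≤ i) (hm1 : 1 ≤ m) (hn1 : 1 ≤ n)
    (hm : a i = 2 * m) (hn : a (i + 1) = 2 * n) :
    !![p (i - 2) - m * p (i - 1), q (i - 2) - m * q (i - 1);
       n * p i - p (i - 1), n * q i - q (i - 1)].det = n * a i - n * m - 1 ∧
    n * a i - n * m - 1 = n * m - 1 ∧
    (!![p (i - 2) - m * p (i - 1), q (i - 2) - m * q (i - 1);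
        n * p i - p (i - 1), n * q i - q (i - 1)].det = 1 ↔
      (a i = 2 ∧ a (i + 1) = 4) ∨ (a i = 4 ∧ a (i + 1) = 2)) := by
  -- key identity: p (j-1) * q j - p j * q (j-1) = 1 for all j ≥ 1
  have key : ∀ j : ℤ, 1 ≤ j → p (j - 1) * q j - p j * q (j - 1) = 1 := by
    intro j hj
    refine Int.le_induction (motive := fun j _ => p (j - 1) * q j - p j * q (j - 1) = 1) ?_ ?_ j hj
    · norm_num [hp0, hq1, hq0]
    · intro j hj ih
      have hpj := hp (j + 1) (by linarith)
      have hqj := hq (j + 1) (by linarith)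
      have e1 : j + 1 - 1 = j := by ring
      have e2 : j + 1 - 2 = j - 1 := by ring
      rw [e1, e2] at hpj hqj
      rw [e1, hpj, hqj]
      linear_combination ih
  have k1 : p (i - 2) * q (i - 1) - p (i - 1) * q (i - 2) = 1 := by
    have := key (i - 1) (by linarith)
    have e : i - 1 - 1 = i - 2 := by ring
    rw [e] at this; linarith
  have k2 : p (i - 1) * q i - p i * q (i - 1) = 1 := key i (by linarith)
  have k3 : p (i - 2) * q i - p i * q (i - 2) = a i := by
    have hpi := hp i (by linarith)
    have hqi := hq i hi
    rw [hpi, hqi]; linear_combination a i * k1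
  have hdet : !![p (i - 2) - m * p (i - 1), q (i - 2) - m * q (i - 1);
       n * p i - p (i - 1), n * q i - q (i - 1)].det = n * a i - n * m - 1 := by
    rw [Matrix.det_fin_two_of]
    linear_combination n * k3 - k1 - m * n * k2
  have heq : n * a i - n * m - 1 = n * m - 1 := by rw [hm]; ring
  refine ⟨hdet, heq, ?_⟩
  rw [hdet, heq]
  constructor
  · intro h
    have hnm : n * m = 2 := by linarith
    have hm2 : m ≤ 2 := by nlinarith
    interval_cases m <;> omega
  · intro h
    rcases h with ⟨h1, h2⟩ | ⟨h1, h2⟩ <;> (rw [hm] at h1; rw [hn] at h2; nlinarith)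
end

section
/- Suppose a_i and a_{i+1} are both odd and ≥ 2 (hence ≥ 3). Then det of the matrix with rows (2p_{i-2} - a_i p_{i-1}, 2q_{i-2} - a_i q_{i-1}) and (a_{i+1} p_i - 2p_{i-1}, a_{i+1} q_i - 2q_{i-1}) equals a_i a_{i+1} - 4, which is never equal to 1. -/
/-- If `a_i` and `a_{i+1}` are both odd and `≥ 2` (hence `≥ 3`), then the determinant of the
matrix with rows `(2p_{i-2} - a_i p_{i-1}, 2q_{i-2} - a_i q_{i-1})` and
`(a_{i+1} p_i - 2p_{i-1}, a_{i+1} q_i - 2q_{i-1})` equals `a_i a_{i+1} - 4`,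
which is never `1`. -/
theorem stmt10 (a p q : ℤ → ℤ)
    (ha : ∀ j : ℤ, 2 ≤ j → 2 ≤ a j)
    (hpm1 : p (-1) = 0) (hp0 : p 0 = 1)
    (hp : ∀ j : ℤ, 1 ≤ j → p j = a j * p (j - 1) - p (j - 2))
    (hq0 : q 0 = 0) (hq1 : q 1 = 1)
    (hq : ∀ j : ℤ, 2 ≤ j → q j = a j * q (j - 1) - q (j - 2))
    (i : ℤ) (hi : 2 ≤ i) (hodd : Odd (a i)) (hodd' : Odd (a (i + 1))) :
    !![2 * p (i - 2) - a i * p (i - 1), 2 * q (i - 2) - a i * q (i - 1);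
       a (i + 1) * p i - 2 * p (i - 1), a (i + 1) * q i - 2 * q (i - 1)].det =
      a i * a (i + 1) - 4 ∧
    !![2 * p (i - 2) - a i * p (i - 1), 2 * q (i - 2) - a i * q (i - 1);
       a (i + 1) * p i - 2 * p (i - 1), a (i + 1) * q i - 2 * q (i - 1)].det ≠ 1 := by
  have D : ∀ j : ℤ, 1 ≤ j → p (j - 1) * q j - p j * q (j - 1) = 1 := by
    refine Int.le_induction ?_ ?_
    · norm_num [hp0, hq1, hq0]
    · intro n hn ih
      have hpn := hp (n + 1) (by linarith)
      have hqn := hq (n + 1) (by linarith)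
      have e1 : n + 1 - 1 = n := by ring
      have e2 : n + 1 - 2 = n - 1 := by ring
      rw [e1, e2] at hpn hqn
      rw [e1, hpn, hqn]
      linear_combination ih
  have hd := D (i - 1) (by linarith)
  have e : i - 1 - 1 = i - 2 := by ring
  rw [e] at hd
  have hpi := hp i (by linarith)
  have hqi := hq i hi
  have hdet : !![2 * p (i - 2) - a i * p (i - 1), 2 * q (i - 2) - a i * q (i - 1);
       a (i + 1) * p i - 2 * p (i - 1), a (i + 1) * q i - 2 * q (i - 1)].det =
      a i * a (i + 1) - 4 := by
    rw [Matrix.det_fin_two_of, hpi, hqi]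
    linear_combination (a i * a (i + 1) - 4) * hd
  refine ⟨hdet, ?_⟩
  rw [hdet]
  have h1 : 3 ≤ a i := by
    obtain ⟨k, hk⟩ := hodd
    have := ha i hi
    omega
  have h2 : 3 ≤ a (i + 1) := by
    obtain ⟨k, hk⟩ := hodd'
    have := ha (i + 1) (by linarith)
    omega
  nlinarith
end

section
/- Suppose a_{i+1} = 4 (so n = 2 in a_{i+1} = 2n). Then 2v_i - v_{i-1} does not equal any of the vectors v_{i-1}, v_i, v_j - v_{i-1}, or v_j - v_i for j ∉ {i-1, i}, 0 ≤ j ≤ r, where the v_j are the Hilbert basis vectors of a two-dimensional cone (pairwise distinct irreducible elements of the saturated semigroup with v_{i+1} = 4v_i - v_{i-1}). -/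
/-- A nonzero element of a submonoid `Γ` of `ℤ²` is irreducible if it is not a sum of two
nonzero elements of `Γ`. -/
def IsIrreducibleIn (Γ : AddSubmonoid (ℤ × ℤ)) (x : ℤ × ℤ) : Prop :=
  x ∈ Γ ∧ x ≠ 0 ∧ ∀ y z : ℤ × ℤ, y ∈ Γ → z ∈ Γ → y ≠ 0 → z ≠ 0 → x ≠ y + z

/-- Suppose `a_{i+1} = 4`, i.e. `v_{i+1} = 4 v_i - v_{i-1}`, and `v_i = a_i v_{i-1} - v_{i-2}`
with `a_i ≥ 2`, where `v_0, …, v_r` are the pairwise distinct irreducible elements (Hilbert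
basis) of a saturated semigroup `Γ ⊆ ℤ²`. Then `2v_i - v_{i-1}` does not equal any of the
vectors `v_{i-1}`, `v_i`, `v_j - v_{i-1}`, or `v_j - v_i` for `j ∉ {i-1, i}`, `0 ≤ j ≤ r`. -/
theorem stmt18 (Γ : AddSubmonoid (ℤ × ℤ)) (r : ℕ) (v : ℕ → ℤ × ℤ) (i : ℕ) (aᵢ : ℤ)
    (hmem : ∀ j ≤ r, v j ∈ Γ)
    (hirr : ∀ j ≤ r, IsIrreducibleIn Γ (v j))
    (hdist : ∀ j ≤ r, ∀ k ≤ r, j ≠ k → v j ≠ v k)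
    (hi2 : 2 ≤ i) (hir : i + 1 ≤ r)
    (hai : 2 ≤ aᵢ)
    (hvi : v i = aᵢ • v (i - 1) - v (i - 2))
    (hvi1 : v (i + 1) = (4 : ℤ) • v i - v (i - 1)) :
    ((2 : ℤ) • v i - v (i - 1) ≠ v (i - 1)) ∧
    ((2 : ℤ) • v i - v (i - 1) ≠ v i) ∧
    (∀ j ≤ r, j ≠ i - 1 → j ≠ i →
      (2 : ℤ) • v i - v (i - 1) ≠ v j - v (i - 1) ∧
      (2 : ℤ) • v i - v (i - 1) ≠ v j - v i) := by
  have hne : v i ≠ v (i - 1) := hdist i (by omega) (i - 1) (by omega) (by omega)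
  have hvi0 : v i ≠ 0 := (hirr i (by omega)).2.1
  refine ⟨?_, ?_, ?_⟩
  · intro h
    apply hne
    have h1 := congrArg Prod.fst h
    have h2 := congrArg Prod.snd h
    simp [Prod.smul_def] at h1 h2
    exact Prod.ext (by omega) (by omega)
  · intro h
    apply hne
    have h1 := congrArg Prod.fst h
    have h2 := congrArg Prod.snd h
    simp [Prod.smul_def] at h1 h2
    exact Prod.ext (by omega) (by omega)
  · intro j hj hj1 hj2
    constructor
    · intro h
      refine (hirr j hj).2.2 (v i) (v i) (hmem i (by omega)) (hmem i (by omega)) hvi0 hvi0 ?_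
      have h1 := congrArg Prod.fst h
      have h2 := congrArg Prod.snd h
      simp [Prod.smul_def] at h1 h2
      exact Prod.ext (by simp; omega) (by simp; omega)
    · intro h
      have hvj0 : v j ≠ 0 := (hirr j hj).2.1
      refine (hirr (i + 1) hir).2.2 (v j) (v i) (hmem j hj) (hmem i (by omega)) hvj0 hvi0 ?_
      have h1 := congrArg Prod.fst h
      have h2 := congrArg Prod.snd h
      have g1 := congrArg Prod.fst hvi1
      have g2 := congrArg Prod.snd hvi1
      simp [Prod.smul_def] at h1 h2 g1 g2
      exact Prod.ext (by simp; omega) (by simp; omega)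
end
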